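/- Let M be a simple matroid. Then M is modular if and only if M has an adjoint adM whose lattice of flats L(adM) is isomorphic to the opposite (order-reversed) lattice L(M)^op of the lattice of flats of M. -/

import Mathlib

open Set Matroid
open scoped Matroid

namespace AdjointPaper

variable {α β γ : Type*}

/-- The rank of a set `X` in a matroid `M`: the supremum of cardinalities of
independent subsets of `X`. -/
noncomputable def mrank (M : Matroid α) (X : Set α) : ℕ :=
  sSup (Set.ncard '' {I | M.Indep I ∧ I ⊆ X})

/-- The rank of a matroid. -/
noncomputable def mrk (M : Matroid α) : ℕ := mrank M M.E

/-- A hyperplane of `M`: a coatom of the lattice of flats. -/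
def IsHyperplane (M : Matroid α) (H : Set α) : Prop :=
  M.IsFlat H ∧ H ≠ M.E ∧ ∀ F, M.IsFlat F → H ⊂ F → F = M.E

/-- An atom of the lattice of flats of `M`. -/
def IsFlatAtom (M : Matroid α) (P : Set α) : Prop :=
  M.IsFlat P ∧ M.closure ∅ ⊂ P ∧ ∀ F, M.IsFlat F → M.closure ∅ ⊂ F → F ⊆ P → F = P

/-- `e` is a loop of `M`. -/
def IsLoop (M : Matroid α) (e : α) : Prop := e ∈ M.E ∧ ¬ M.Indep {e}

/-- `M` is loopless. -/
def Loopless (M : Matroid α) : Prop := ∀ e ∈ M.E, M.Indep {e}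

/-- `M` is simple: loopless and with no two parallel elements. -/
def Simple (M : Matroid α) : Prop :=
  (∀ e ∈ M.E, M.Indep {e}) ∧
    ∀ e ∈ M.E, ∀ f ∈ M.E, M.closure {e} = M.closure {f} → e = f

/-- `φ` is an adjoint map from `M` to `N`: an injective, order-reversing map on
flats taking hyperplanes of `M` bijectively onto the atoms of `N`, with
`N` of the same rank as `M`. -/
structure IsAdjointMap (M : Matroid α) (N : Matroid β) (φ : Set α → Set β) : Prop where
  rank_eq : mrk N = mrk M
  flat : ∀ ⦃F⦄, M.IsFlat F → N.IsFlat (φ F)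
  inj : ∀ ⦃F F'⦄, M.IsFlat F → M.IsFlat F' → φ F = φ F' → F = F'
  antitone : ∀ ⦃F F'⦄, M.IsFlat F → M.IsFlat F' → F ⊆ F' → φ F' ⊆ φ F
  hyper_atom : ∀ ⦃H⦄, IsHyperplane M H → IsFlatAtom N (φ H)
  atom_surj : ∀ ⦃P⦄, IsFlatAtom N P → ∃ H, IsHyperplane M H ∧ φ H = P

/-- `N` is an adjoint of `M`. -/
def IsAdjoint (M : Matroid α) (N : Matroid β) : Prop := ∃ φ, IsAdjointMap M N φ

/-- Isomorphism of matroids. -/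
def Iso (M : Matroid α) (N : Matroid β) : Prop :=
  ∃ f : α → β, Set.BijOn f M.E N.E ∧ ∀ I ⊆ M.E, (M.Indep I ↔ N.Indep (f '' I))

/-- Connectedness: `M` has nonempty ground set and is not a direct sum of two
matroids on nonempty ground sets. -/
def Conn (M : Matroid α) : Prop :=
  M.E.Nonempty ∧ ∀ (N₁ N₂ : Matroid α) (h : Disjoint N₁.E N₂.E),
    N₁.E.Nonempty → N₂.E.Nonempty → M ≠ Matroid.disjointSum N₁ N₂ h

/-- A circuit of `M`: a minimal dependent set. -/
def IsCircuit (M : Matroid α) (C : Set α) : Prop :=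
  C ⊆ M.E ∧ ¬ M.Indep C ∧ ∀ D, D ⊂ C → M.Indep D

/-- `K` is a connected component of `M`. -/
def ConnComponent (M : Matroid α) (K : Set α) : Prop :=
  K ⊆ M.E ∧ K.Nonempty ∧ Conn (M ↾ K) ∧
    ∀ C, IsCircuit M C → C ⊆ K ∨ Disjoint C K

/-- `M` is a modular matroid: every pair of flats is a modular pair. -/
def Modular (M : Matroid α) : Prop :=
  ∀ F F', M.IsFlat F → M.IsFlat F' →
    mrank M (M.closure (F ∪ F')) + mrank M (F ∩ F') = mrank M F + mrank M F'

/-- The lattice of flats of `N` is isomorphic to the opposite of the lattice of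
flats of `M`. -/
def FlatOpIso (M : Matroid α) (N : Matroid β) : Prop :=
  ∃ ψ : Set α → Set β, (∀ F, M.IsFlat F → N.IsFlat (ψ F)) ∧
    (∀ F F', M.IsFlat F → M.IsFlat F' → (F ⊆ F' ↔ ψ F' ⊆ ψ F)) ∧
    ∀ G, N.IsFlat G → ∃ F, M.IsFlat F ∧ ψ F = G

/-- A linear subclass of `M`: a set of hyperplanes closed under the hyperplanes
through a comodular intersection of two of its members. The lattice of all
linear subclasses ordered by inclusion is the extension lattice `E(M)`. -/
def LinearSubclass (M : Matroid α) (S : Set (Set α)) : Prop :=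
  (∀ H ∈ S, IsHyperplane M H) ∧
    ∀ H₁ ∈ S, ∀ H₂ ∈ S, mrank M (H₁ ∩ H₂) = mrk M - 2 →
      ∀ H₃, IsHyperplane M H₃ → H₁ ∩ H₂ ⊆ H₃ → H₃ ∈ S

/-- `N` is (isomorphic to) the projective geometry `PG (r-1, F)`, via a
representation `f` hitting every point of the projective space exactly once. -/
def IsProjGeomRep (N : Matroid β) (r : ℕ) (F : Type*) [Field F] : Prop :=
  ∃ f : β → (Fin r → F),
    (∀ e ∈ N.E, f e ≠ 0) ∧
    (∀ e ∈ N.E, ∀ e' ∈ N.E,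
      Submodule.span F {f e} = Submodule.span F {f e'} → e = e') ∧
    (∀ v : Fin r → F, v ≠ 0 → ∃ e ∈ N.E, Submodule.span F {f e} = Submodule.span F {v}) ∧
    ∀ I, I ⊆ N.E → (N.Indep I ↔ LinearIndependent F (fun x : I => f x.1))

/-- `N` is (isomorphic to) the finite projective geometry `PG (r-1, q)`. -/
def IsProjGeom (N : Matroid β) (r q : ℕ) : Prop :=
  ∃ (F : Type) (instF : Field F) (instT : Fintype F),
    @Fintype.card F instT = q ∧ @IsProjGeomRep _ N r F instF

/-- `M` is a projective plane: a simple rank-3 matroid in which every line has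
at least three points and every two lines meet. -/
def IsProjPlane (M : Matroid α) : Prop :=
  Simple M ∧ mrk M = 3 ∧
    (∀ L, M.IsFlat L → mrank M L = 2 → 3 ≤ L.ncard) ∧
    ∀ L L', M.IsFlat L → M.IsFlat L' → mrank M L = 2 → mrank M L' = 2 → (L ∩ L').Nonempty

/-- `N` is (isomorphic to) the uniform matroid `U_{r,m}`. -/
def IsUnif (N : Matroid β) (r m : ℕ) : Prop :=
  N.E.Finite ∧ N.E.ncard = m ∧ ∀ I, I ⊆ N.E → (N.Indep I ↔ I.Finite ∧ I.ncard ≤ r)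


/-!
For a modular matroid `M` the adjoint lives on the hyperplanes: a finite family of hyperplanes is
independent when the codimension of its intersection equals its size. Modularity is exactly what
makes adding one hyperplane raise this codimension by at most one, which gives the augmentation
axiom; the closure of a family is then the set of hyperplanes containing its intersection, so
`F ↦ {H | F ⊆ H}` is an anti-isomorphism from the flats of `M` onto those of the adjoint.

Conversely, an anti-isomorphism `ψ` of flat lattices reverses covers, so `r F + r (ψ F)` is
constant. Submodularity in the target, transported back through `ψ`, is then the reverse of the
submodular inequality of `M`, which is modularity.
-/

section Flats

variable {M : Matroid α} {F F' : Set α} {e : α}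

lemma _root_.Matroid.IsFlat.inter (hF : M.IsFlat F) (hF' : M.IsFlat F') : M.IsFlat (F ∩ F') := by
  rw [inter_eq_iInter]
  exact IsFlat.iInter fun b ↦ by cases b <;> assumption

lemma _root_.Matroid.IsFlat.ssubset_closure_insert (hF : M.IsFlat F) (he : e ∈ M.E \ F) :
    F ⊂ M.closure (insert e F) :=
  (M.subset_closure_of_subset' (subset_insert e F) hF.subset_ground).ssubset_of_ne
    fun h ↦ he.2 (h ▸ M.mem_closure_of_mem' (mem_insert e F) he.1)

end Flats

section Rank

variable {M : Matroid α} [M.RankFinite] {X Y I F F' : Set α} {e : α}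

lemma mrank_eq_ncard (hI : M.IsBasis' I X) : mrank M X = I.ncard := by
  refine IsGreatest.csSup_eq ⟨⟨I, ⟨hI.indep, hI.subset⟩, rfl⟩, ?_⟩
  rintro _ ⟨J, ⟨hJ, hJX⟩, rfl⟩
  have hle := hJ.encard_le_eRk_of_subset hJX
  rw [← hI.encard_eq_eRk, ← hJ.finite.cast_ncard_eq, ← hI.indep.finite.cast_ncard_eq] at hle
  exact_mod_cast hle

lemma natCast_mrank (M : Matroid α) [M.RankFinite] (X : Set α) :
    (mrank M X : ℕ∞) = M.eRk X := by
  obtain ⟨I, hI⟩ := M.exists_isBasis' X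
  rw [mrank_eq_ncard hI, hI.indep.finite.cast_ncard_eq, hI.encard_eq_eRk]

lemma _root_.Matroid.Indep.mrank_eq (hI : M.Indep I) : mrank M I = I.ncard :=
  mrank_eq_ncard hI.isBasis_self.isBasis'

lemma mrank_mono (h : X ⊆ Y) : mrank M X ≤ mrank M Y := by
  have := M.eRk_mono h
  rwa [← natCast_mrank, ← natCast_mrank, Nat.cast_le] at this

lemma mrank_closure (X : Set α) : mrank M (M.closure X) = mrank M X := by
  have := M.eRk_closure_eq X
  rwa [← natCast_mrank, ← natCast_mrank, Nat.cast_inj] at this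

lemma mrank_insert_eq_add_one (he : e ∈ M.E \ M.closure X) :
    mrank M (insert e X) = mrank M X + 1 := by
  have := eRk_insert_eq_add_one he
  rwa [← natCast_mrank, ← natCast_mrank, ← Nat.cast_one, ← Nat.cast_add, Nat.cast_inj] at this

lemma mrank_inter_add_mrank_union_le (X Y : Set α) :
    mrank M (X ∩ Y) + mrank M (X ∪ Y) ≤ mrank M X + mrank M Y := by
  have := M.eRk_inter_add_eRk_union_le X Y
  rwa [← natCast_mrank, ← natCast_mrank, ← natCast_mrank, ← natCast_mrank, ← Nat.cast_add,
    ← Nat.cast_add, Nat.cast_le] at this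

lemma mem_closure_iff_mrank_insert (he : e ∈ M.E) :
    e ∈ M.closure X ↔ mrank M (insert e X) = mrank M X := by
  refine ⟨fun h ↦ ?_, fun h ↦ by_contra fun hX ↦ ?_⟩
  · rw [← mrank_closure, closure_insert_eq_of_mem_closure h, mrank_closure]
  · rw [mrank_insert_eq_add_one ⟨he, hX⟩] at h
    omega

lemma _root_.Matroid.IsFlat.mrank_lt_of_ssubset (hF : M.IsFlat F) (hFF' : F ⊂ F') (hF' : F' ⊆ M.E) :
    mrank M F < mrank M F' := by
  obtain ⟨e, heF', heF⟩ := exists_of_ssubset hFF'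
  have hins : mrank M (insert e F) = mrank M F + 1 :=
    mrank_insert_eq_add_one ⟨hF' heF', by rwa [hF.closure]⟩
  have := mrank_mono (M := M) (insert_subset heF' hFF'.subset)
  omega

lemma _root_.Matroid.IsFlat.eq_of_subset_of_mrank_le (hF : M.IsFlat F) (hF' : M.IsFlat F')
    (hFF' : F ⊆ F') (hr : mrank M F' ≤ mrank M F) : F = F' :=
  hFF'.eq_or_ssubset.elim id fun h ↦ absurd (hF.mrank_lt_of_ssubset h hF'.subset_ground) (by omega)

lemma _root_.Matroid.IsFlat.eq_loops_of_mrank_eq_zero (hF : M.IsFlat F) (h : mrank M F = 0) :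
    F = M.closure ∅ := by
  refine ((M.isFlat_closure ∅).eq_of_subset_of_mrank_le hF hF.loops_subset ?_).symm
  omega

end Rank

lemma rankFinite_of_finite_isFlat {N : Matroid β} (h : {G | N.IsFlat G}.Finite) :
    N.RankFinite := by
  obtain ⟨B, hB⟩ := N.exists_isBase
  refine hB.rankFinite_of_finite (Set.Finite.of_finite_image (f := fun e ↦ N.closure {e})
    (h.subset ?_) fun e he f hf hef ↦ ?_)
  · rintro _ ⟨e, -, rfl⟩
    exact N.isFlat_closure _
  · have := hB.indep.closure_inter_eq_self_of_subset (singleton_subset_iff.2 he)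
    rw [show N.closure {e} = N.closure {f} from hef,
      hB.indep.closure_inter_eq_self_of_subset (singleton_subset_iff.2 hf)] at this
    exact (singleton_eq_singleton_iff.1 this).symm

def FlatCovBy (M : Matroid α) (F F' : Set α) : Prop :=
  M.IsFlat F ∧ M.IsFlat F' ∧ F ⊂ F' ∧ ∀ G, M.IsFlat G → F ⊆ G → G ⊆ F' → G = F ∨ G = F'

section FlatCovBy

variable {M : Matroid α} [M.RankFinite] {F F' : Set α}

lemma FlatCovBy.mrank_eq (h : FlatCovBy M F F') : mrank M F' = mrank M F + 1 := by
  obtain ⟨hF, hF', hFF', hmin⟩ := h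
  obtain ⟨e, heF', heF⟩ := exists_of_ssubset hFF'
  have hr : mrank M (M.closure (insert e F)) = mrank M F + 1 := by
    rw [mrank_closure, mrank_insert_eq_add_one ⟨hF'.subset_ground heF', by rwa [hF.closure]⟩]
  have hFG : F ⊆ M.closure (insert e F) :=
    M.subset_closure_of_subset' (subset_insert e F) hF.subset_ground
  have hGF' : M.closure (insert e F) ⊆ F' :=
    hF'.closure ▸ M.closure_subset_closure (insert_subset heF' hFF'.subset)
  rcases hmin _ (M.isFlat_closure _) hFG hGF' with h | h
  · rw [h] at hr
    omega
  · rwa [h] at hr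

lemma flatCovBy_of_mrank_eq_add_one (hF : M.IsFlat F) (hF' : M.IsFlat F') (hFF' : F ⊆ F')
    (h : mrank M F' = mrank M F + 1) : FlatCovBy M F F' := by
  refine ⟨hF, hF', hFF'.ssubset_of_ne (by rintro rfl; omega), fun G hG hFG hGF' ↦ ?_⟩
  have := mrank_mono (M := M) hGF'
  by_cases hGF : mrank M G ≤ mrank M F
  · exact .inl (hF.eq_of_subset_of_mrank_le hG hFG hGF).symm
  · exact .inr (hG.eq_of_subset_of_mrank_le hF' hGF' (by omega))

lemma exists_flatCovBy (hF : M.IsFlat F) (h : mrank M F ≠ 0) : ∃ F₀, FlatCovBy M F₀ F := by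
  obtain ⟨I, hI⟩ := M.exists_isBasis F
  rw [mrank_eq_ncard hI.isBasis'] at h
  obtain ⟨e, he⟩ := nonempty_of_ncard_ne_zero h
  refine ⟨M.closure (I \ {e}), flatCovBy_of_mrank_eq_add_one (M.isFlat_closure _) hF ?_ ?_⟩
  · rw [← hF.closure, ← hI.closure_eq_closure]
    exact M.closure_subset_closure sdiff_subset
  · rw [mrank_closure, (hI.indep.subset sdiff_subset).mrank_eq, mrank_eq_ncard hI.isBasis',
      ncard_sdiff_singleton_add_one he hI.indep.finite]

end FlatCovBy

structure IsFlatAntiIso (M : Matroid α) (N : Matroid β) (ψ : Set α → Set β) : Prop where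
  isFlat : ∀ ⦃F⦄, M.IsFlat F → N.IsFlat (ψ F)
  subset_iff : ∀ ⦃F F'⦄, M.IsFlat F → M.IsFlat F' → (F ⊆ F' ↔ ψ F' ⊆ ψ F)
  surj : ∀ ⦃G⦄, N.IsFlat G → ∃ F, M.IsFlat F ∧ ψ F = G

lemma flatOpIso_iff {M : Matroid α} {N : Matroid β} :
    FlatOpIso M N ↔ ∃ ψ, IsFlatAntiIso M N ψ :=
  ⟨fun ⟨ψ, h₁, h₂, h₃⟩ ↦ ⟨ψ, ⟨fun F ↦ h₁ F, fun F F' ↦ h₂ F F', fun G ↦ h₃ G⟩⟩,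
    fun ⟨ψ, h⟩ ↦ ⟨ψ, fun _ ↦ (h.isFlat ·), fun _ _ hF hF' ↦ h.subset_iff hF hF',
      fun _ ↦ (h.surj ·)⟩⟩

namespace IsFlatAntiIso

variable {M : Matroid α} {N : Matroid β} {ψ : Set α → Set β} {F F' H : Set α} {P : Set β}

lemma inj (h : IsFlatAntiIso M N ψ) (hF : M.IsFlat F) (hF' : M.IsFlat F') (he : ψ F = ψ F') :
    F = F' :=
  ((h.subset_iff hF hF').2 he.symm.subset).antisymm ((h.subset_iff hF' hF).2 he.subset)

lemma map_ground (h : IsFlatAntiIso M N ψ) : ψ M.E = N.closure ∅ := by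
  obtain ⟨F, hF, hψF⟩ := h.surj (N.isFlat_closure ∅)
  have hEF : M.E ⊆ F :=
    (h.subset_iff M.ground_isFlat hF).2 (hψF ▸ (h.isFlat M.ground_isFlat).loops_subset)
  rw [← hψF, hEF.antisymm hF.subset_ground]

lemma isFlatAtom (h : IsFlatAntiIso M N ψ) (hH : IsHyperplane M H) : IsFlatAtom N (ψ H) := by
  obtain ⟨hHf, hHE, hmax⟩ := hH
  refine ⟨h.isFlat hHf, ?_, fun P hP hlt hPH ↦ ?_⟩
  · rw [← h.map_ground]
    exact ((h.subset_iff hHf M.ground_isFlat).1 hHf.subset_ground).ssubset_of_ne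
      fun he ↦ hHE (h.inj hHf M.ground_isFlat he.symm)
  obtain ⟨F, hF, rfl⟩ := h.surj hP
  obtain rfl | hHF := ((h.subset_iff hHf hF).2 hPH).eq_or_ssubset
  · rfl
  rw [hmax F hF hHF, h.map_ground] at hlt
  exact absurd hlt (lt_irrefl _)

lemma exists_isHyperplane (h : IsFlatAntiIso M N ψ) (hP : IsFlatAtom N P) :
    ∃ H, IsHyperplane M H ∧ ψ H = P := by
  obtain ⟨hPf, hlt, hmin⟩ := hP
  obtain ⟨H, hH, rfl⟩ := h.surj hPf
  refine ⟨H, ⟨hH, ?_, fun F hF hHF ↦ by_contra fun hFE ↦ ?_⟩, rfl⟩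
  · rintro rfl
    rw [h.map_ground] at hlt
    exact hlt.ne rfl
  have hlt' : N.closure ∅ ⊂ ψ F := (h.isFlat hF).loops_subset.ssubset_of_ne
    fun he ↦ hFE (h.inj M.ground_isFlat hF (h.map_ground.trans he)).symm
  exact hHF.ne (h.inj hH hF (hmin _ (h.isFlat hF) hlt' ((h.subset_iff hH hF).1 hHF.subset)).symm)

lemma isAdjointMap (h : IsFlatAntiIso M N ψ) (hr : mrk N = mrk M) : IsAdjointMap M N ψ where
  rank_eq := hr
  flat := h.isFlat
  inj _ _ hF hF' := h.inj hF hF'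
  antitone _ _ hF hF' := (h.subset_iff hF hF').1
  hyper_atom _ := h.isFlatAtom
  atom_surj _ := h.exists_isHyperplane

lemma flatCovBy (h : IsFlatAntiIso M N ψ) (hc : FlatCovBy M F F') : FlatCovBy N (ψ F') (ψ F) := by
  obtain ⟨hF, hF', hFF', hmin⟩ := hc
  refine ⟨h.isFlat hF', h.isFlat hF, ((h.subset_iff hF hF').1 hFF'.subset).ssubset_of_ne
    fun he ↦ hFF'.ne (h.inj hF hF' he.symm), fun G hG h₁ h₂ ↦ ?_⟩
  obtain ⟨G, hG', rfl⟩ := h.surj hG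
  exact (hmin G hG' ((h.subset_iff hF hG').2 h₂) ((h.subset_iff hG' hF').2 h₁)).symm.imp
    (congrArg ψ) (congrArg ψ)

lemma rankFinite [M.Finite] (h : IsFlatAntiIso M N ψ) : N.RankFinite := by
  refine rankFinite_of_finite_isFlat ((M.ground_finite.finite_subsets.subset
    fun F (hF : M.IsFlat F) ↦ hF.subset_ground).image ψ |>.subset fun G hG ↦ ?_)
  obtain ⟨F, hF, rfl⟩ := h.surj hG
  exact mem_image_of_mem ψ hF

lemma mrank_add_mrank [M.RankFinite] [N.RankFinite] (h : IsFlatAntiIso M N ψ)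
    (hF : M.IsFlat F) : mrank M F + mrank N (ψ F) = mrank N (ψ (M.closure ∅)) := by
  induction hn : mrank M F generalizing F with
  | zero => rw [hF.eq_loops_of_mrank_eq_zero hn, zero_add]
  | succ n ih =>
    obtain ⟨F₀, hc⟩ := exists_flatCovBy hF (by omega)
    have h₀ := ih hc.1 (by have := hc.mrank_eq; omega)
    have := (h.flatCovBy hc).mrank_eq
    omega

lemma map_closure_union_subset (h : IsFlatAntiIso M N ψ) (hF : M.IsFlat F) (hF' : M.IsFlat F') :
    ψ (M.closure (F ∪ F')) ⊆ ψ F ∩ ψ F' := by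
  have hJ := M.isFlat_closure (F ∪ F')
  have hsub := M.subset_closure (F ∪ F') (union_subset hF.subset_ground hF'.subset_ground)
  exact subset_inter ((h.subset_iff hF hJ).1 (subset_union_left.trans hsub))
    ((h.subset_iff hF' hJ).1 (subset_union_right.trans hsub))

lemma map_inter_subset_closure (h : IsFlatAntiIso M N ψ) (hF : M.IsFlat F) (hF' : M.IsFlat F') :
    ψ (F ∩ F') ⊆ N.closure (ψ F ∪ ψ F') := by
  obtain ⟨G, hG, hψG⟩ := h.surj (N.isFlat_closure (ψ F ∪ ψ F'))
  have hsub := N.subset_closure (ψ F ∪ ψ F')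
    (union_subset (h.isFlat hF).subset_ground (h.isFlat hF').subset_ground)
  rw [← hψG] at hsub ⊢
  exact (h.subset_iff hG (hF.inter hF')).1 (subset_inter
    ((h.subset_iff hG hF).2 (subset_union_left.trans hsub))
    ((h.subset_iff hG hF').2 (subset_union_right.trans hsub)))

lemma modular [M.Finite] (h : IsFlatAntiIso M N ψ) : Modular M := by
  have := h.rankFinite
  intro F F' hF hF'
  have hJ := h.mrank_add_mrank (M.isFlat_closure (F ∪ F'))
  have hI := h.mrank_add_mrank (hF.inter hF')
  have h₁ := h.mrank_add_mrank hF
  have h₂ := h.mrank_add_mrank hF'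
  have hM : mrank M (F ∩ F') + mrank M (M.closure (F ∪ F')) ≤ mrank M F + mrank M F' := by
    rw [mrank_closure]
    exact mrank_inter_add_mrank_union_le F F'
  have hN := mrank_inter_add_mrank_union_le (M := N) (ψ F) (ψ F')
  have hJ' := mrank_mono (M := N) (h.map_closure_union_subset hF hF')
  have hI' := mrank_mono (M := N) (h.map_inter_subset_closure hF hF')
  rw [mrank_closure] at hI'
  omega

end IsFlatAntiIso

def hyperplanes (M : Matroid α) : Set (Set α) := {H | IsHyperplane M H}

/-- `M.E` is included so that the empty family meets in the top flat. -/
def meet (M : Matroid α) (G : Set (Set α)) : Set α := ⋂₀ insert M.E G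

noncomputable def codim (M : Matroid α) (G : Set (Set α)) : ℕ := mrk M - mrank M (meet M G)

def hyperplanesAbove (M : Matroid α) (F : Set α) : Set (Set α) := {H | IsHyperplane M H ∧ F ⊆ H}

section Hyperplanes

variable {M : Matroid α} {F H X : Set α} {G K : Set (Set α)} {e : α}

lemma hyperplanes_finite [M.Finite] : (hyperplanes M).Finite :=
  M.ground_finite.finite_subsets.subset fun _ hH ↦ hH.1.subset_ground

lemma meet_subset_ground : meet M G ⊆ M.E :=
  sInter_subset_of_mem (mem_insert _ _)

lemma meet_subset_of_mem (hH : H ∈ G) : meet M G ⊆ H :=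
  sInter_subset_of_mem (mem_insert_of_mem _ hH)

lemma meet_anti {G' : Set (Set α)} (h : G ⊆ G') : meet M G' ⊆ meet M G :=
  sInter_subset_sInter (insert_subset_insert h)

lemma subset_meet_iff : X ⊆ meet M G ↔ X ⊆ M.E ∧ ∀ H ∈ G, X ⊆ H := by
  simp [meet, subset_sInter_iff]

lemma meet_empty (M : Matroid α) : meet M ∅ = M.E := by simp [meet]

lemma meet_insert (H : Set α) (G : Set (Set α)) : meet M (insert H G) = H ∩ meet M G := by
  rw [meet, insert_comm, sInter_insert, meet]

lemma meet_union_of_forall_subset (h : ∀ H ∈ K, meet M G ⊆ H) : meet M (G ∪ K) = meet M G :=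
  (meet_anti subset_union_left).antisymm <| subset_meet_iff.2
    ⟨meet_subset_ground, fun H hH ↦ hH.elim meet_subset_of_mem (h H)⟩

lemma isFlat_meet (hG : G ⊆ hyperplanes M) : M.IsFlat (meet M G) := by
  rw [meet, sInter_eq_iInter]
  refine IsFlat.iInter ?_
  rintro ⟨F, rfl | hF⟩
  exacts [M.ground_isFlat, (hG hF).1]

lemma isHyperplane_of_maximal (hH : Maximal (fun F ↦ M.IsFlat F ∧ e ∉ F) H) (he : e ∈ M.E) :
    IsHyperplane M H := by
  obtain ⟨⟨hHf, heH⟩, hmax⟩ := hH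
  have hup : ∀ F, M.IsFlat F → H ⊂ F → e ∈ F := fun F hF hHF ↦
    by_contra fun heF ↦ hHF.not_subset (hmax ⟨hF, heF⟩ hHF.subset)
  -- by exchange, `e` spans every `f` outside `H`
  have hspan : M.closure (insert e H) = M.E := by
    refine (M.closure_subset_ground _).antisymm fun f hf ↦ by_contra fun hfcl ↦ ?_
    have hfH : f ∉ H := fun h ↦ hfcl (M.mem_closure_of_mem' (mem_insert_of_mem e h))
    have hef := hup _ (M.isFlat_closure _) (hHf.ssubset_closure_insert ⟨hf, hfH⟩)
    exact hfcl (closure_exchange ⟨hef, by rwa [hHf.closure]⟩).1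
  refine ⟨hHf, fun h ↦ heH (h ▸ he), fun F hF hHF ↦ hF.subset_ground.antisymm ?_⟩
  rw [← hspan, ← hF.closure]
  exact M.closure_subset_closure (insert_subset (hup F hF hHF) hHF.subset)

lemma exists_isHyperplane_avoiding [M.Finite] (hF : M.IsFlat F) (he : e ∈ M.E \ F) :
    ∃ H, IsHyperplane M H ∧ F ⊆ H ∧ e ∉ H := by
  have hfin : {F | M.IsFlat F ∧ e ∉ F}.Finite :=
    M.ground_finite.finite_subsets.subset fun F hF ↦ hF.1.subset_ground
  obtain ⟨H, hFH, hH⟩ := hfin.exists_le_maximal (show M.IsFlat F ∧ e ∉ F from ⟨hF, he.2⟩)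
  exact ⟨H, isHyperplane_of_maximal hH he.1, hFH, hH.prop.2⟩

lemma meet_hyperplanesAbove [M.Finite] (hF : M.IsFlat F) : meet M (hyperplanesAbove M F) = F := by
  refine subset_antisymm (fun e he ↦ by_contra fun heF ↦ ?_)
    (subset_meet_iff.2 ⟨hF.subset_ground, fun H hH ↦ hH.2⟩)
  obtain ⟨H, hH, hFH, heH⟩ := exists_isHyperplane_avoiding hF ⟨meet_subset_ground he, heF⟩
  exact heH (meet_subset_of_mem (G := hyperplanesAbove M F) ⟨hH, hFH⟩ he)

lemma hyperplanesAbove_loops : hyperplanesAbove M (M.closure ∅) = hyperplanes M :=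
  Set.ext fun _ ↦ and_iff_left_of_imp fun hH ↦ hH.1.loops_subset

lemma codim_empty : codim M ∅ = 0 := by
  rw [codim, meet_empty, mrk, Nat.sub_self]

variable [M.RankFinite]

lemma IsHyperplane.mrank_add_one (hH : IsHyperplane M H) : mrank M H + 1 = mrk M := by
  obtain ⟨hHf, hHE, hmax⟩ := hH
  obtain ⟨e, heE, heH⟩ := exists_of_ssubset (hHf.subset_ground.ssubset_of_ne hHE)
  have hcl := hmax _ (M.isFlat_closure _) (hHf.ssubset_closure_insert ⟨heE, heH⟩)
  rw [mrk, ← hcl, mrank_closure, mrank_insert_eq_add_one ⟨heE, by rwa [hHf.closure]⟩]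

lemma codim_add_mrank (G : Set (Set α)) : codim M G + mrank M (meet M G) = mrk M :=
  Nat.sub_add_cancel (mrank_mono meet_subset_ground)

lemma codim_mono {G' : Set (Set α)} (h : G ⊆ G') : codim M G ≤ codim M G' :=
  Nat.sub_le_sub_left (mrank_mono (meet_anti h)) _

lemma codim_insert_eq_iff (hG : G ⊆ hyperplanes M) (hH : IsHyperplane M H) :
    codim M (insert H G) = codim M G ↔ meet M G ⊆ H := by
  refine ⟨fun h ↦ ?_, fun h ↦ by rw [codim, meet_insert, inter_eq_self_of_subset_right h, codim]⟩
  have h₁ := codim_add_mrank (M := M) (insert H G)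
  have h₂ := codim_add_mrank (M := M) G
  have hflat := isFlat_meet (insert_subset hH hG)
  rw [meet_insert] at h₁ hflat
  exact inter_eq_right.1 (hflat.eq_of_subset_of_mrank_le (isFlat_meet hG) inter_subset_right
    (by omega))

lemma codim_insert_le (hMod : Modular M) (hG : G ⊆ hyperplanes M) (hH : IsHyperplane M H) :
    codim M (insert H G) ≤ codim M G + 1 := by
  have hmod := hMod _ _ (isFlat_meet hG) hH.1
  have hjoin : mrank M (M.closure (meet M G ∪ H)) ≤ mrk M := mrank_mono (M.closure_subset_ground _)
  have h₁ := codim_add_mrank (M := M) (insert H G)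
  have h₂ := codim_add_mrank (M := M) G
  have h₃ := hH.mrank_add_one
  rw [meet_insert, inter_comm] at h₁
  omega

lemma codim_union_le (hMod : Modular M) (hG : G ⊆ hyperplanes M) (hK : K.Finite)
    (hKh : K ⊆ hyperplanes M) : codim M (G ∪ K) ≤ codim M G + K.ncard := by
  induction K, hK using Set.Finite.induction_on with
  | empty => simp
  | @insert H K hHK hK ih =>
    rw [union_insert, ncard_insert_of_notMem hHK hK]
    have := codim_insert_le hMod (union_subset hG ((subset_insert H K).trans hKh))
      (hKh (mem_insert H K))
    have := ih ((subset_insert H K).trans hKh)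
    omega

end Hyperplanes

section Adjoint

variable {M : Matroid α} [M.Finite] {H : Set α} {G I J P : Set (Set α)}

lemma codim_eq_ncard_of_subset (hMod : Modular M) (hJ : J ⊆ hyperplanes M)
    (hJc : codim M J = J.ncard) (hIJ : I ⊆ J) : codim M I = I.ncard := by
  have hJfin := hyperplanes_finite.subset hJ
  have hIfin := hJfin.subset hIJ
  have h₁ := codim_union_le hMod (empty_subset _) hIfin (hIJ.trans hJ)
  have h₂ := codim_union_le hMod (hIJ.trans hJ) (hJfin.sdiff (t := I)) (sdiff_subset.trans hJ)
  rw [empty_union, codim_empty, zero_add] at h₁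
  rw [union_sdiff_cancel hIJ, ncard_sdiff hIJ hIfin] at h₂
  have := ncard_le_ncard hIJ hJfin
  omega

lemma meet_subset_of_codim_insert_ne (hMod : Modular M) (hI : I ⊆ hyperplanes M)
    (hIc : codim M I = I.ncard) (hH : IsHyperplane M H) (hHI : H ∉ I)
    (hne : codim M (insert H I) ≠ (insert H I).ncard) : meet M I ⊆ H := by
  rw [ncard_insert_of_notMem hHI (hyperplanes_finite.subset hI)] at hne
  have := codim_insert_le hMod hI hH
  have := codim_mono (M := M) (subset_insert H I)
  exact (codim_insert_eq_iff hI hH).1 (by omega)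

lemma exists_codim_insert_eq_ncard (hMod : Modular M) (hI : I ⊆ hyperplanes M)
    (hIc : codim M I = I.ncard) (hJ : J ⊆ hyperplanes M) (hJc : codim M J = J.ncard)
    (hlt : I.ncard < J.ncard) :
    ∃ H ∈ J, H ∉ I ∧ insert H I ⊆ hyperplanes M ∧ codim M (insert H I) = (insert H I).ncard := by
  by_contra! hcon
  have hmeet : meet M (I ∪ J) = meet M I := meet_union_of_forall_subset fun H hHJ ↦ by
    by_cases hHI : H ∈ I
    · exact meet_subset_of_mem hHI
    · exact meet_subset_of_codim_insert_ne hMod hI hIc (hJ hHJ) hHI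
        (hcon H hHJ hHI (insert_subset (hJ hHJ) hI))
  have hcodim : codim M (I ∪ J) = codim M I := by rw [codim, hmeet, codim]
  have := codim_mono (M := M) (subset_union_right (s := I) (t := J))
  omega

noncomputable def modularAdjoint (M : Matroid α) [M.Finite] (hMod : Modular M) :
    Matroid (Set α) :=
  (IndepMatroid.ofFinite hyperplanes_finite (fun G ↦ G ⊆ hyperplanes M ∧ codim M G = G.ncard)
    ⟨empty_subset _, by rw [codim_empty, ncard_empty]⟩
    (fun _ _ hJ hIJ ↦ ⟨hIJ.trans hJ.1, codim_eq_ncard_of_subset hMod hJ.1 hJ.2 hIJ⟩)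
    (fun _ _ hI hJ ↦ exists_codim_insert_eq_ncard hMod hI.1 hI.2 hJ.1 hJ.2)
    fun _ hG ↦ hG.1).matroid

variable {hMod : Modular M}

instance : (modularAdjoint M hMod).Finite := ⟨hyperplanes_finite⟩

lemma modularAdjoint_ground : (modularAdjoint M hMod).E = hyperplanes M := rfl

lemma mrank_modularAdjoint (hG : G ⊆ hyperplanes M) :
    mrank (modularAdjoint M hMod) G = codim M G := by
  obtain ⟨I, hI⟩ := (modularAdjoint M hMod).exists_isBasis G hG
  obtain ⟨hIh, hIc⟩ := hI.indep
  have hmeet : meet M G = meet M I := by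
    rw [← union_sdiff_cancel hI.subset]
    exact meet_union_of_forall_subset fun H hH ↦ meet_subset_of_codim_insert_ne hMod hIh hIc
      (hG hH.1) hH.2 fun hc ↦ (hI.insert_dep hH).not_indep ⟨insert_subset (hG hH.1) hIh, hc⟩
  rw [mrank_eq_ncard hI.isBasis', ← hIc, codim, codim, hmeet]

lemma modularAdjoint_closure (hP : P ⊆ hyperplanes M) :
    (modularAdjoint M hMod).closure P = hyperplanesAbove M (meet M P) := by
  ext H
  by_cases hH : IsHyperplane M H
  · rw [mem_closure_iff_mrank_insert hH, mrank_modularAdjoint (insert_subset hH hP),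
      mrank_modularAdjoint hP, codim_insert_eq_iff hP hH]
    exact (and_iff_right hH).symm
  · exact iff_of_false (fun h ↦ hH (closure_subset_ground _ _ h)) fun h ↦ hH h.1

lemma isFlatAntiIso_hyperplanesAbove :
    IsFlatAntiIso M (modularAdjoint M hMod) (hyperplanesAbove M) where
  isFlat F hF := by
    rw [isFlat_iff_closure_eq, modularAdjoint_closure fun _ hH ↦ hH.1, meet_hyperplanesAbove hF]
  subset_iff F F' hF hF' := ⟨fun h H hH ↦ ⟨hH.1, h.trans hH.2⟩, fun h ↦ by
    simpa only [meet_hyperplanesAbove hF, meet_hyperplanesAbove hF'] using meet_anti (M := M) h⟩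
  surj P hP := ⟨meet M P, isFlat_meet hP.subset_ground,
    by rw [← modularAdjoint_closure (hMod := hMod) hP.subset_ground, hP.closure]⟩

lemma mrk_modularAdjoint : mrk (modularAdjoint M hMod) = mrk M := by
  have h := codim_add_mrank (M := M) (hyperplanes M)
  rw [← hyperplanesAbove_loops, meet_hyperplanesAbove (M.isFlat_closure ∅), mrank_closure,
    M.empty_indep.mrank_eq, ncard_empty, add_zero] at h
  rw [mrk, modularAdjoint_ground, mrank_modularAdjoint subset_rfl, ← hyperplanesAbove_loops, h]

end Adjoint

theorem statement_7_general {M : Matroid α} [M.Finite] :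
    Modular M ↔ ∃ N : Matroid (Set α), IsAdjoint M N ∧ FlatOpIso M N := by
  refine ⟨fun hMod ↦ ?_, fun ⟨_, _, hN⟩ ↦ ?_⟩
  · have h := isFlatAntiIso_hyperplanesAbove (hMod := hMod)
    exact ⟨modularAdjoint M hMod, ⟨_, h.isAdjointMap mrk_modularAdjoint⟩, flatOpIso_iff.2 ⟨_, h⟩⟩
  · obtain ⟨ψ, h⟩ := flatOpIso_iff.1 hN
    exact h.modular

/-- a simple matroid is modular iff it has an adjoint whose flat
lattice is isomorphic to the opposite of its own flat lattice. -/
theorem statement_7 {M : Matroid α} [M.Finite] (hM : Simple M) :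
    Modular M ↔ ∃ N : Matroid (Set α), IsAdjoint M N ∧ FlatOpIso M N :=
  statement_7_general

end AdjointPaper
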